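/- Let V be an n-dimensional real inner product space and A a symmetric bilinear (quadratic) form on V with eigenvalues λ₁ ≤ λ₂ ≤ ⋯ ≤ λₙ. Then for any k-dimensional subspace W ⊆ V, the trace of the restriction of A to W (computed with respect to any orthonormal basis of W) satisfies tr(A|_W) ≥ λ₁ + λ₂ + ⋯ + λ_k. -/

import Mathlib

lemma aux_sum_if {n k : ℕ} (hk : k ≤ n) (g : ℕ → ℝ) :
    ∑ j : Fin n, (if (j : ℕ) < k then g j else 0) = ∑ m ∈ Finset.range k, g m := by
  rw [Fin.sum_univ_eq_sum_range (fun m => if m < k then g m else 0) n]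
  have h1 : ∀ m ∈ Finset.range n, (if m < k then g m else 0)
      = if m ∈ Finset.range k then g m else 0 := by
    intro m _; simp [Finset.mem_range]
  rw [Finset.sum_congr rfl h1, Finset.sum_ite_mem,
    Finset.inter_eq_right.2 (Finset.range_subset_range.2 hk)]

/-- Eigenvalue/trace lemma: for a symmetric operator with eigenvalues
`lam 0 ≤ ⋯ ≤ lam (n-1)` and any `k`-dimensional subspace `W`, the trace of the
restriction to `W` (computed in any orthonormal basis of `W`) is at least the
sum of the `k` smallest eigenvalues. -/
theorem stmt_0 {n k : ℕ} (hk : k ≤ n)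
    (T : EuclideanSpace ℝ (Fin n) →ₗ[ℝ] EuclideanSpace ℝ (Fin n))
    (hT : T.IsSymmetric)
    (lam : Fin n → ℝ) (hmono : Monotone lam)
    (b : OrthonormalBasis (Fin n) ℝ (EuclideanSpace ℝ (Fin n)))
    (hb : ∀ i, T (b i) = lam i • b i)
    (W : Submodule ℝ (EuclideanSpace ℝ (Fin n)))
    (hW : Module.finrank ℝ W = k)
    (e : OrthonormalBasis (Fin k) ℝ W) :
    (∑ i : Fin k, (inner ℝ (T ((e i : W) : EuclideanSpace ℝ (Fin n)))
        ((e i : W) : EuclideanSpace ℝ (Fin n)) : ℝ))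
      ≥ ∑ i : Fin k, lam (Fin.castLE hk i) := by
  rcases Nat.eq_zero_or_pos k with hk0 | hk0
  · subst hk0; simp
  set V := EuclideanSpace ℝ (Fin n)
  set f : Fin k → V := fun i => ((e i : W) : V) with hf_def
  have hf : Orthonormal ℝ f := e.orthonormal.comp_linearIsometry W.subtypeₗᵢ
  -- quadratic form expansion
  have key1 : ∀ x : V, (inner ℝ (T x) x : ℝ) = ∑ j, lam j * (inner ℝ (b j) x : ℝ) ^ 2 := by
    intro x
    rw [← b.sum_inner_mul_inner (T x) x]
    refine Finset.sum_congr rfl fun j _ => ?_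
    rw [hT x (b j), hb j, inner_smul_right, real_inner_comm x (b j)]
    ring
  set d : Fin n → ℝ := fun j => ∑ i : Fin k, (inner ℝ (b j) (f i) : ℝ) ^ 2 with hd_def
  have hd0 : ∀ j, 0 ≤ d j := fun j =>
    Finset.sum_nonneg fun i _ => sq_nonneg _
  have hd1 : ∀ j, d j ≤ 1 := by
    intro j
    have := hf.sum_inner_products_le (𝕜 := ℝ) (b j) (s := Finset.univ)
    have hbn : ‖b j‖ = 1 := b.orthonormal.1 j
    rw [hbn] at this
    calc d j = ∑ i : Fin k, ‖(inner ℝ (f i) (b j) : ℝ)‖ ^ 2 := by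
          refine Finset.sum_congr rfl fun i _ => ?_
          rw [real_inner_comm, Real.norm_eq_abs, sq_abs]
      _ ≤ 1 ^ 2 := this
      _ = 1 := one_pow 2
  have hfn : ∀ i, (inner ℝ (f i) (f i) : ℝ) = 1 := by
    intro i
    rw [real_inner_self_eq_norm_sq, hf.1 i, one_pow]
  have hdsum : ∑ j, d j = (k : ℝ) := by
    have hswap : ∑ j : Fin n, d j = ∑ i : Fin k, ∑ j : Fin n, (inner ℝ (b j) (f i) : ℝ) ^ 2 :=
      Finset.sum_comm
    have h1 : ∀ i : Fin k, ∑ j : Fin n, (inner ℝ (b j) (f i) : ℝ) ^ 2 = 1 := by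
      intro i
      have := b.sum_inner_mul_inner (f i) (f i)
      rw [hfn i] at this
      rw [← this]
      refine Finset.sum_congr rfl fun j _ => ?_
      rw [real_inner_comm (f i) (b j)]; ring
    rw [hswap, Finset.sum_congr rfl fun i _ => h1 i, Finset.sum_const, Finset.card_univ]
    simp
  set u : Fin n → ℝ := fun j => if (j : ℕ) < k then 1 else 0 with hu_def
  set g : ℕ → ℝ := fun m => if h : m < n then lam ⟨m, h⟩ else 0 with hg_def
  have hg : ∀ j : Fin n, g (j : ℕ) = lam j := by
    intro j; simp [hg_def, j.isLt]
  have husum : ∑ j, u j = (k : ℝ) := by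
    have := aux_sum_if hk (fun _ => (1 : ℝ))
    simp only [hu_def]
    rw [this, Finset.sum_const, Finset.card_range]
    simp
  have hRHS : ∑ i : Fin k, lam (Fin.castLE hk i) = ∑ j, lam j * u j := by
    have h1 : ∑ j : Fin n, lam j * u j
        = ∑ j : Fin n, (if (j : ℕ) < k then g j else 0) := by
      refine Finset.sum_congr rfl fun j _ => ?_
      simp only [hu_def, hg]
      split <;> ring
    have h2 : ∑ i : Fin k, lam (Fin.castLE hk i) = ∑ i : Fin k, g (i : ℕ) := by
      refine Finset.sum_congr rfl fun i _ => ?_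
      exact (hg (Fin.castLE hk i)).symm
    rw [h1, aux_sum_if hk g, h2, Fin.sum_univ_eq_sum_range (fun m => g m) k]
  have hLHS : ∑ i : Fin k, (inner ℝ (T (f i)) (f i) : ℝ) = ∑ j, lam j * d j := by
    calc ∑ i : Fin k, (inner ℝ (T (f i)) (f i) : ℝ)
        = ∑ i : Fin k, ∑ j : Fin n, lam j * (inner ℝ (b j) (f i) : ℝ) ^ 2 := by
          exact Finset.sum_congr rfl fun i _ => key1 (f i)
      _ = ∑ j : Fin n, ∑ i : Fin k, lam j * (inner ℝ (b j) (f i) : ℝ) ^ 2 :=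
          Finset.sum_comm
      _ = ∑ j, lam j * d j := by
          refine Finset.sum_congr rfl fun j _ => ?_
          rw [hd_def, Finset.mul_sum]
  -- threshold
  have hk1n : k - 1 < n := lt_of_lt_of_le (Nat.sub_lt hk0 one_pos) hk
  set t : ℝ := lam ⟨k - 1, hk1n⟩ with ht_def
  have term_nonneg : ∀ j : Fin n, 0 ≤ (lam j - t) * (d j - u j) := by
    intro j
    by_cases hj : (j : ℕ) < k
    · have h1 : u j = 1 := by simp [hu_def, hj]
      have h2 : lam j ≤ t := hmono (by simp [Fin.le_def]; omega)
      have h3 : d j - u j ≤ 0 := by rw [h1]; linarith [hd1 j]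
      nlinarith [hd1 j]
    · have h1 : u j = 0 := by simp [hu_def, hj]
      have h2 : t ≤ lam j := hmono (by simp [Fin.le_def]; omega)
      have h3 : 0 ≤ d j - u j := by rw [h1]; linarith [hd0 j]
      exact mul_nonneg (by linarith) h3
  have key : 0 ≤ ∑ j, (lam j - t) * (d j - u j) :=
    Finset.sum_nonneg fun j _ => term_nonneg j
  have expand : ∑ j, (lam j - t) * (d j - u j)
      = (∑ j, lam j * d j) - (∑ j, lam j * u j) - t * (∑ j, d j) + t * (∑ j, u j) := by
    rw [Finset.mul_sum, Finset.mul_sum, ← Finset.sum_sub_distrib, ← Finset.sum_sub_distrib,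
      ← Finset.sum_add_distrib]
    exact Finset.sum_congr rfl fun j _ => by ring
  rw [expand, hdsum, husum] at key
  rw [ge_iff_le, hRHS]
  calc ∑ j, lam j * u j ≤ ∑ j, lam j * d j := by linarith
    _ = ∑ i : Fin k, (inner ℝ (T (f i)) (f i) : ℝ) := hLHS.symm
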